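/- Let e_1, e_2, e_3 ∈ ℂ be pairwise distinct. Let E = ℂ[v_1,v_2,v_3]/I, where I is the ideal generated by the polynomials v_i² − v_j² + e_i − e_j (1 ≤ i, j ≤ 3), let v̂_i ∈ E be the image of v_i. Let so_3(ℂ) have a basis α_1, α_2, α_3 with [α_1,α_2] = α_3, [α_2,α_3] = α_1, [α_3,α_1] = α_2, and let R = R_{e_1,e_2,e_3} be the Lie subalgebra of so_3(ℂ) ⊗_ℂ E generated by α_1⊗v̂_1, α_2⊗v̂_2, α_3⊗v̂_3. Then every Lie ideal of R that is nilpotent as a Lie algebra is the zero ideal (R has no nontrivial nilpotent ideals). -/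

import Mathlib

noncomputable section

section PolyAux
open Polynomial

abbrev KK := RatFunc ℂ

def sK : KK := algebraMap (Polynomial ℂ) KK X

lemma sK_ne : sK ≠ 0 := by
  simp only [sK, ne_eq, map_eq_zero_iff _ (RatFunc.algebraMap_injective ℂ)]
  exact X_ne_zero

lemma two_sK_ne : (2 : KK) * sK ≠ 0 :=
  mul_ne_zero (by
    have h : algebraMap (Polynomial ℂ) KK 2 ≠ 0 :=
      (map_ne_zero_iff _ (RatFunc.algebraMap_injective ℂ)).mpr (by norm_num)
    simpa [map_ofNat] using h) sK_ne

def tK (a : ℂ) : KK := (sK ^ 2 - algebraMap ℂ KK a) / (2 * sK)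
def yK (a : ℂ) : KK := (sK ^ 2 + algebraMap ℂ KK a) / (2 * sK)

lemma tK_mul (a : ℂ) : (2 * sK) * tK a = sK ^ 2 - algebraMap ℂ KK a := by
  rw [tK, mul_div_cancel₀ _ two_sK_ne]

lemma yK_mul (a : ℂ) : (2 * sK) * yK a = sK ^ 2 + algebraMap ℂ KK a := by
  rw [yK, mul_div_cancel₀ _ two_sK_ne]

lemma algebraMap_C_eq (a : ℂ) : algebraMap (Polynomial ℂ) KK (C a) = algebraMap ℂ KK a := by
  rw [← Polynomial.algebraMap_eq, ← IsScalarTower.algebraMap_apply]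

lemma clearP (a : ℂ) (q : Polynomial ℂ) (d : ℕ) (hd : q.natDegree < d + 1) :
    (2 * sK) ^ d * Polynomial.aeval (tK a) q =
      algebraMap (Polynomial ℂ) KK
        (∑ k ∈ Finset.range (d + 1), C (q.coeff k) * (X ^ 2 - C a) ^ k * (2 * X) ^ (d - k)) := by
  rw [aeval_eq_sum_range' hd, Finset.mul_sum, map_sum]
  refine Finset.sum_congr rfl fun k hk => ?_
  have hk' : k ≤ d := Nat.lt_succ_iff.mp (Finset.mem_range.mp hk)
  have h2 : ((2 : KK) * sK) ^ d = (2 * sK) ^ k * (2 * sK) ^ (d - k) := by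
    rw [← pow_add]; congr 1; omega
  have hX : algebraMap (Polynomial ℂ) KK X = sK := rfl
  have h2' : algebraMap (Polynomial ℂ) KK 2 = 2 := map_ofNat _ 2
  rw [Algebra.smul_def]
  simp only [map_mul, map_pow, map_sub, algebraMap_C_eq, hX, h2']
  rw [← tK_mul a, h2]
  ring

lemma evalG (a : ℂ) (q : Polynomial ℂ) (d : ℕ) (hd : q.natDegree < d + 1) (lam mu : ℂ)
    (hmu : lam ^ 2 - a = 2 * mu * lam) :
    Polynomial.eval lam
        (∑ k ∈ Finset.range (d + 1), C (q.coeff k) * (X ^ 2 - C a) ^ k * (2 * X) ^ (d - k))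
      = (2 * lam) ^ d * q.eval mu := by
  rw [eval_finset_sum, eval_eq_sum_range' hd, Finset.mul_sum]
  refine Finset.sum_congr rfl fun k hk => ?_
  have hk' : k ≤ d := Nat.lt_succ_iff.mp (Finset.mem_range.mp hk)
  have h2 : ((2 : ℂ) * lam) ^ d = (2 * lam) ^ k * (2 * lam) ^ (d - k) := by
    rw [← pow_add]; congr 1; omega
  simp only [eval_mul, eval_pow, eval_C, eval_sub, eval_X, eval_ofNat]
  rw [hmu, h2]
  ring

lemma indep_claim (a : ℂ) (q₀ q₁ : Polynomial ℂ)
    (h : Polynomial.aeval (tK a) q₀ + Polynomial.aeval (tK a) q₁ * yK a = 0)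
    (lam mu : ℂ) (hlam : lam ≠ 0) (hq : lam ^ 2 - 2 * mu * lam - a = 0) :
    2 * lam * q₀.eval mu + (lam ^ 2 + a) * q₁.eval mu = 0 := by
  set e := max q₀.natDegree q₁.natDegree with he
  have hd0 : q₀.natDegree < (e + 1) + 1 := by
    have := le_max_left q₀.natDegree q₁.natDegree; omega
  have hd1 : q₁.natDegree < e + 1 := by
    have := le_max_right q₀.natDegree q₁.natDegree; omega
  set G₀ := ∑ k ∈ Finset.range (e + 1 + 1),
      C (q₀.coeff k) * (X ^ 2 - C a) ^ k * (2 * X) ^ (e + 1 - k) with hG₀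
  set G₁ := ∑ k ∈ Finset.range (e + 1),
      C (q₁.coeff k) * (X ^ 2 - C a) ^ k * (2 * X) ^ (e - k) with hG₁
  have key : algebraMap (Polynomial ℂ) KK (G₀ + G₁ * (X ^ 2 + C a)) = 0 := by
    rw [map_add, map_mul, ← clearP a q₀ (e+1) hd0, ← clearP a q₁ e hd1]
    rw [map_add, map_pow, algebraMap_C_eq]
    have hX : algebraMap (Polynomial ℂ) KK X = sK := rfl
    rw [hX]
    calc (2 * sK) ^ (e + 1) * (Polynomial.aeval (tK a)) q₀ +
          (2 * sK) ^ e * (Polynomial.aeval (tK a)) q₁ * (sK ^ 2 + algebraMap ℂ KK a)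
        = (2 * sK) ^ (e + 1) * (Polynomial.aeval (tK a)) q₀ +
          (2 * sK) ^ e * (Polynomial.aeval (tK a)) q₁ * ((2 * sK) * yK a) := by
          rw [yK_mul]
      _ = (2 * sK) ^ (e + 1) *
            (Polynomial.aeval (tK a) q₀ + Polynomial.aeval (tK a) q₁ * yK a) := by ring
      _ = 0 := by rw [h, mul_zero]
  have hG : G₀ + G₁ * (X ^ 2 + C a) = 0 := by
    exact (map_eq_zero_iff _ (RatFunc.algebraMap_injective ℂ)).mp key
  have hev := congrArg (Polynomial.eval lam) hG
  have hmu : lam ^ 2 - a = 2 * mu * lam := by linear_combination hq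
  rw [eval_add, eval_mul, hG₀, hG₁, evalG a q₀ (e+1) hd0 lam mu hmu,
    evalG a q₁ e hd1 lam mu hmu, eval_zero] at hev
  have h2lam : (2 : ℂ) * lam ≠ 0 := mul_ne_zero two_ne_zero hlam
  have hfac : ((2:ℂ) * lam) ^ e *
      (2 * lam * q₀.eval mu + (lam ^ 2 + a) * q₁.eval mu) = 0 := by
    simp only [eval_add, eval_pow, eval_X, eval_C] at hev
    linear_combination hev
  exact (mul_eq_zero.mp hfac).resolve_left (pow_ne_zero _ h2lam)

lemma exists_lam (a : ℂ) (ha : a ≠ 0) (mu : ℂ) :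
    ∃ lam : ℂ, lam ≠ 0 ∧ lam ^ 2 - 2 * mu * lam - a = 0 := by
  have hdeg : (0 : WithBot ℕ) < (X ^ 2 - C (2*mu) * X - C a : Polynomial ℂ).degree := by
    have heq : (X ^ 2 - C (2*mu) * X - C a : Polynomial ℂ)
        = C 1 * X ^ 2 + C (-(2*mu)) * X + C (-a) := by
      simp only [map_neg, map_one]; ring
    rw [heq, degree_quadratic one_ne_zero]
    decide
  obtain ⟨lam, hl⟩ := Complex.exists_root hdeg
  have hl' : lam ^ 2 - 2 * mu * lam - a = 0 := by
    simpa [IsRoot] using hl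
  refine ⟨lam, fun h0 => ha ?_, hl'⟩
  rw [h0] at hl'
  linear_combination -hl'

lemma indep (a : ℂ) (ha : a ≠ 0) (q₀ q₁ : Polynomial ℂ)
    (h : Polynomial.aeval (tK a) q₀ + Polynomial.aeval (tK a) q₁ * yK a = 0) :
    q₀ = 0 ∧ q₁ = 0 := by
  have hq1 : q₁ = 0 := by
    by_contra hq1
    have hX2 : (X ^ 2 + C a : Polynomial ℂ) ≠ 0 := by
      have : (X ^ 2 + C a : Polynomial ℂ) = X ^ 2 - C (-a) := by simp [map_neg, sub_neg_eq_add]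
      rw [this]
      exact (monic_X_pow_sub_C (-a) two_ne_zero).ne_zero
    have hne : q₁ * (X ^ 2 + C a) ≠ 0 := mul_ne_zero hq1 hX2
    obtain ⟨mu, hmu⟩ : ∃ mu, Polynomial.eval mu (q₁ * (X ^ 2 + C a)) ≠ 0 := by
      by_contra hc
      push_neg at hc
      exact hne (Polynomial.funext fun r => by simpa using hc r)
    rw [eval_mul] at hmu
    have hmu1 : q₁.eval mu ≠ 0 := fun hh => hmu (by rw [hh, zero_mul])
    have hmu2 : mu ^ 2 + a ≠ 0 := fun hh => hmu (by rw [eval_add, eval_pow, eval_X, eval_C, hh, mul_zero])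
    obtain ⟨lam, hlam, hl⟩ := exists_lam a ha mu
    set lam2 := 2 * mu - lam with hlam2def
    have hl2 : lam2 ^ 2 - 2 * mu * lam2 - a = 0 := by
      rw [hlam2def]; linear_combination hl
    have hlam2 : lam2 ≠ 0 := by
      intro h0
      rw [h0] at hl2
      exact ha (by linear_combination -hl2)
    have hnl : lam ≠ lam2 := by
      intro hh
      have hlm : lam = mu := by rw [hlam2def] at hh; linear_combination hh / 2
      apply hmu2
      rw [hlm] at hl
      linear_combination -hl
    have e1 := indep_claim a q₀ q₁ h lam mu hlam hl
    have e2 := indep_claim a q₀ q₁ h lam2 mu hlam2 hl2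
    have hq0 : q₀.eval mu = -mu * q₁.eval mu := by
      have hsub : (2 * (lam - lam2)) * (q₀.eval mu - (-mu * q₁.eval mu)) = 0 := by
        linear_combination e1 - e2 - (q₁.eval mu) * hl + (q₁.eval mu) * hl2
      have h1 : (2 : ℂ) * (lam - lam2) ≠ 0 :=
        mul_ne_zero two_ne_zero (sub_ne_zero.mpr hnl)
      have := (mul_eq_zero.mp hsub).resolve_left h1
      linear_combination this
    have hfin : 2 * a * q₁.eval mu = 0 := by
      linear_combination e1 - 2 * lam * hq0 - (q₁.eval mu) * hl
    exact hmu1 ((mul_eq_zero.mp hfin).resolve_left (mul_ne_zero two_ne_zero ha))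
  refine ⟨?_, hq1⟩
  have hz : ∀ mu : ℂ, q₀.eval mu = 0 := by
    intro mu
    obtain ⟨lam, hlam, hl⟩ := exists_lam a ha mu
    have e1 := indep_claim a q₀ q₁ h lam mu hlam hl
    rw [hq1, eval_zero, mul_zero, add_zero] at e1
    have h2lam : (2 : ℂ) * lam ≠ 0 := mul_ne_zero two_ne_zero hlam
    exact (mul_eq_zero.mp e1).resolve_left h2lam
  exact Polynomial.funext fun r => by simpa using hz r

def Qp (a b : ℂ) : Polynomial ℂ := (X ^ 2 - C a) ^ 2 + C (4 * b) * X ^ 2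

lemma deg_sq (a : ℂ) : ((X ^ 2 - C a : Polynomial ℂ) ^ 2).degree = 4 := by
  rw [degree_pow, degree_X_pow_sub_C (by norm_num : 0 < 2)]
  rfl

lemma Qp_monic (a b : ℂ) : (Qp a b).Monic := by
  refine ((monic_X_pow_sub_C a two_ne_zero).pow 2).add_of_left ?_
  rw [deg_sq]
  exact lt_of_le_of_lt (degree_C_mul_X_pow_le 2 (4 * b)) (by decide)

lemma Qp_degree (a b : ℂ) : (Qp a b).degree = 4 := by
  rw [Qp, degree_add_eq_left_of_degree_lt, deg_sq]
  rw [deg_sq]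
  exact lt_of_le_of_lt (degree_C_mul_X_pow_le 2 (4 * b)) (by decide)

lemma Qp_ne_zero (a b : ℂ) : Qp a b ≠ 0 := (Qp_monic a b).ne_zero

/-- A simple root of `Qp`. -/
lemma Qp_simple_root (a b : ℂ) (ha : a ≠ 0) (hb : b ≠ 0) (hab : a ≠ b) :
    ∃ r : ℂ, (Qp a b).IsRoot r ∧ ¬ ((Qp a b).derivative.IsRoot r) := by
  obtain ⟨r, hr⟩ := Complex.exists_root (by rw [Qp_degree]; decide :
    (0 : WithBot ℕ) < (Qp a b).degree)
  refine ⟨r, hr, fun hd => ?_⟩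
  have hrval : r ^ 4 - 2 * a * r ^ 2 + a ^ 2 + 4 * b * r ^ 2 = 0 := by
    have := hr
    simp only [IsRoot, Qp, eval_add, eval_mul, eval_pow, eval_sub, eval_C, eval_X] at this
    linear_combination this
  have hdval : 4 * r * (r ^ 2 - a + 2 * b) = 0 := by
    have := hd
    simp only [IsRoot, Qp, derivative_add, derivative_mul, derivative_pow, derivative_sub,
      derivative_C, derivative_X, derivative_X_pow, eval_add, eval_mul, eval_pow, eval_sub,
      eval_C, eval_X, eval_natCast, eval_one, eval_zero, derivative_one] at this
    norm_num at this
    linear_combination this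
  have hr0 : r ≠ 0 := by
    intro h0
    rw [h0] at hrval
    exact ha (by have : a ^ 2 = 0 := by linear_combination hrval
                 exact pow_eq_zero_iff (by norm_num) |>.mp this)
  have h2 : r ^ 2 - a + 2 * b = 0 := by
    rcases mul_eq_zero.mp hdval with h | h
    · exact absurd (by rcases mul_eq_zero.mp h with h' | h'
                       · exact absurd h' (by norm_num)
                       · exact h') hr0
    · exact h
  have : 4 * b * (a - b) = 0 := by
    linear_combination hrval + (-(r ^ 2) + a - 2 * b) * h2
  rcases mul_eq_zero.mp this with h | h
  · exact hb (by rcases mul_eq_zero.mp h with h' | h'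
                 · exact absurd h' (by norm_num)
                 · exact h')
  · exact hab (by linear_combination h)

lemma no_sqrt (a b : ℂ) (ha : a ≠ 0) (hb : b ≠ 0) (hab : a ≠ b) (r : KK) :
    r ^ 2 ≠ algebraMap (Polynomial ℂ) KK (Qp a b) := by
  intro hr
  have hint : IsIntegral (Polynomial ℂ) r := by
    refine ⟨X ^ 2 - C (Qp a b), monic_X_pow_sub_C _ two_ne_zero, ?_⟩
    simp [eval₂_sub, eval₂_pow, hr]
  obtain ⟨p, hp⟩ := IsIntegrallyClosed.isIntegral_iff.mp hint
  have hpq : p * p = Qp a b := by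
    apply RatFunc.algebraMap_injective ℂ
    rw [map_mul, hp, ← pow_two, hr]
  obtain ⟨r₀, hr₀, hd₀⟩ := Qp_simple_root a b ha hb hab
  have hpne : p ≠ 0 := by
    intro h0
    rw [h0, mul_zero] at hpq
    exact Qp_ne_zero a b hpq.symm
  -- root multiplicity of Qp at r₀ is 1
  have hm1 : rootMultiplicity r₀ (Qp a b) = 1 := by
    have hpos : 0 < rootMultiplicity r₀ (Qp a b) :=
      (rootMultiplicity_pos (Qp_ne_zero a b)).mpr hr₀
    by_contra hne1
    have h2le : 2 ≤ rootMultiplicity r₀ (Qp a b) := by omega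
    have hdvd : (X - C r₀) ^ 2 ∣ Qp a b :=
      dvd_trans (pow_dvd_pow _ h2le) (pow_rootMultiplicity_dvd _ _)
    obtain ⟨g, hg⟩ := hdvd
    apply hd₀
    rw [hg]
    simp [derivative_mul, derivative_pow]
  rw [← hpq, rootMultiplicity_mul (by rw [hpq]; exact Qp_ne_zero a b)] at hm1
  omega

def qKK (a b : ℂ) : KK := algebraMap (Polynomial ℂ) KK (Qp a b)

abbrev FF (a b : ℂ) := AdjoinRoot (X ^ 2 - C (qKK a b) : Polynomial KK)

def WW (a b : ℂ) : FF a b := AdjoinRoot.root _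

def TT (a b : ℂ) : FF a b := algebraMap KK (FF a b) (tK a)
def YY (a b : ℂ) : FF a b := algebraMap KK (FF a b) (yK a)
def ZZ (a b : ℂ) : FF a b := algebraMap KK (FF a b) ((2 * sK)⁻¹) * WW a b

lemma WW_sq (a b : ℂ) : WW a b ^ 2 = algebraMap KK (FF a b) (qKK a b) := by
  have h := AdjoinRoot.isRoot_root (X ^ 2 - C (qKK a b) : Polynomial KK)
  simp only [Polynomial.map_sub, Polynomial.map_pow, Polynomial.map_X, Polynomial.map_C,
    IsRoot, eval_sub, eval_pow, eval_X, eval_C] at h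
  rw [AdjoinRoot.algebraMap_eq]
  exact sub_eq_zero.mp h

lemma hX_sK : algebraMap (Polynomial ℂ) KK X = sK := rfl

lemma kk_y (a : ℂ) : yK a ^ 2 = tK a ^ 2 + algebraMap ℂ KK a := by
  have h : yK a ^ 2 - tK a ^ 2 = algebraMap ℂ KK a := by
    rw [tK, yK, div_pow, div_pow, div_sub_div_same]
    have hnum : (sK ^ 2 + algebraMap ℂ KK a) ^ 2 - (sK ^ 2 - algebraMap ℂ KK a) ^ 2
        = algebraMap ℂ KK a * (2 * sK) ^ 2 := by ring
    rw [hnum, mul_div_assoc, div_self (pow_ne_zero 2 two_sK_ne), mul_one]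
  linear_combination h

lemma qKK_eq (a b : ℂ) :
    qKK a b = (sK ^ 2 - algebraMap ℂ KK a) ^ 2 + 4 * algebraMap ℂ KK b * sK ^ 2 := by
  rw [qKK, Qp, map_add, map_mul, map_pow, map_pow, map_sub, algebraMap_C_eq, algebraMap_C_eq,
    map_mul (algebraMap ℂ KK), map_ofNat, map_pow, hX_sK]

lemma kk_z (a b : ℂ) :
    ((2 * sK)⁻¹) ^ 2 * qKK a b = tK a ^ 2 + algebraMap ℂ KK b := by
  have h : ((2 * sK)⁻¹) ^ 2 * qKK a b - tK a ^ 2 = algebraMap ℂ KK b := by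
    rw [qKK_eq, tK, div_pow, inv_pow, inv_mul_eq_div, div_sub_div_same]
    have hnum : (sK ^ 2 - algebraMap ℂ KK a) ^ 2 + 4 * algebraMap ℂ KK b * sK ^ 2 -
        (sK ^ 2 - algebraMap ℂ KK a) ^ 2 = algebraMap ℂ KK b * (2 * sK) ^ 2 := by ring
    rw [hnum, mul_div_assoc, div_self (pow_ne_zero 2 two_sK_ne), mul_one]
  linear_combination h

lemma ZZ_sq (a b : ℂ) : ZZ a b ^ 2 = TT a b ^ 2 + algebraMap ℂ (FF a b) b := by
  rw [ZZ, mul_pow, WW_sq, ← map_pow, ← map_mul, kk_z, TT, map_add, map_pow,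
    IsScalarTower.algebraMap_apply ℂ KK (FF a b)]

lemma YY_sq (a b : ℂ) : YY a b ^ 2 = TT a b ^ 2 + algebraMap ℂ (FF a b) a := by
  rw [YY, TT, ← map_pow, kk_y, map_add, ← map_pow,
    IsScalarTower.algebraMap_apply ℂ KK (FF a b)]


end PolyAux

open MvPolynomial

/-- The ideal of `ℂ[v₁,v₂,v₃]` generated by the polynomials
`v_i² − v_j² + e_i − e_j` (`1 ≤ i,j ≤ 3`). -/
def curveIdeal (e : Fin 3 → ℂ) : Ideal (MvPolynomial (Fin 3) ℂ) :=
  Ideal.span (Set.range fun ij : Fin 3 × Fin 3 =>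
    (X ij.1 : MvPolynomial (Fin 3) ℂ) ^ 2 - X ij.2 ^ 2 + C (e ij.1) - C (e ij.2))

/-- The coordinate ring `E = ℂ[v₁,v₂,v₃]/I` of the affine (elliptic) curve. -/
abbrev Ecur (e : Fin 3 → ℂ) := MvPolynomial (Fin 3) ℂ ⧸ curveIdeal e

/-- `v̂_i ∈ E`, the image of the variable `v_i`. -/
def vhat (e : Fin 3 → ℂ) (i : Fin 3) : Ecur e := Ideal.Quotient.mk (curveIdeal e) (X i)

/-- `z = v̂₁² + e₁ (= v̂₂² + e₂ = v̂₃² + e₃) ∈ E`. -/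
def zed (e : Fin 3 → ℂ) : Ecur e := vhat e 0 ^ 2 + algebraMap ℂ (Ecur e) (e 0)

/-- The bracket of `so₃(ℂ) ⊗_ℂ E` in the coordinates of a basis `α₁, α₂, α₃` of
`so₃(ℂ)` with `[α₁,α₂] = α₃`, `[α₂,α₃] = α₁`, `[α₃,α₁] = α₂` (an element
`Σ_i α_i ⊗ f_i` is recorded as the triple `(f₀,f₁,f₂) : Fin 3 → E`, with
`[p⊗f, q⊗g] = [p,q]⊗fg`). -/
def so3br {e : Fin 3 → ℂ} (f g : Fin 3 → Ecur e) : Fin 3 → Ecur e :=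
  ![f 1 * g 2 - f 2 * g 1, f 2 * g 0 - f 0 * g 2, f 0 * g 1 - f 1 * g 0]

/-- `R = R_{e₁,e₂,e₃}`: the Lie subalgebra (over `ℂ`) of `so₃(ℂ) ⊗_ℂ E` generated by
the elements `α_i ⊗ v̂_i`, `i = 1,2,3`: the smallest `ℂ`-subspace containing them and
closed under the bracket. -/
def lieGenR (e : Fin 3 → ℂ) : Submodule ℂ (Fin 3 → Ecur e) :=
  sInf {S : Submodule ℂ (Fin 3 → Ecur e) |
    (∀ i : Fin 3, Pi.single i (vhat e i) ∈ S) ∧ ∀ x ∈ S, ∀ y ∈ S, so3br x y ∈ S}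

/-- The lower central series of a `ℂ`-subspace `I` of `so₃(ℂ) ⊗_ℂ E` with respect to
the bracket: `C_0 = I`, `C_{j+1} = span_ℂ {[x,y] | x ∈ I, y ∈ C_j}`.  `I` is nilpotent
as a Lie algebra iff this series reaches `⊥` in finitely many steps. -/
def lcsSo3 (e : Fin 3 → ℂ) (I : Submodule ℂ (Fin 3 → Ecur e)) :
    ℕ → Submodule ℂ (Fin 3 → Ecur e)
  | 0 => I
  | j + 1 => Submodule.span ℂ
      {z : Fin 3 → Ecur e | ∃ x ∈ I, ∃ y ∈ lcsSo3 e I j, z = so3br x y}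


def wVec (e : Fin 3 → ℂ) : Fin 3 → FF (e 0 - e 1) (e 0 - e 2) :=
  ![TT (e 0 - e 1) (e 0 - e 2), YY (e 0 - e 1) (e 0 - e 2), ZZ (e 0 - e 1) (e 0 - e 2)]

def phiE (e : Fin 3 → ℂ) : MvPolynomial (Fin 3) ℂ →ₐ[ℂ] FF (e 0 - e 1) (e 0 - e 2) :=
  MvPolynomial.aeval (wVec e)

lemma c_const (e : Fin 3 → ℂ) (i : Fin 3) :
    wVec e i ^ 2 + algebraMap ℂ (FF (e 0 - e 1) (e 0 - e 2)) (e i) =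
      TT (e 0 - e 1) (e 0 - e 2) ^ 2 + algebraMap ℂ (FF (e 0 - e 1) (e 0 - e 2)) (e 0) := by
  fin_cases i
  · rfl
  · show YY _ _ ^ 2 + _ = _
    rw [YY_sq, map_sub, show e ⟨1, by norm_num⟩ = e 1 from rfl]
    ring
  · show ZZ _ _ ^ 2 + _ = _
    rw [ZZ_sq, map_sub, show e ⟨2, by norm_num⟩ = e 2 from rfl]
    ring

lemma phi_gen (e : Fin 3 → ℂ) (ij : Fin 3 × Fin 3) :
    phiE e ((MvPolynomial.X ij.1 : MvPolynomial (Fin 3) ℂ) ^ 2 - MvPolynomial.X ij.2 ^ 2 +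
      MvPolynomial.C (e ij.1) - MvPolynomial.C (e ij.2)) = 0 := by
  simp only [phiE, map_sub, map_add, map_pow, MvPolynomial.aeval_X, MvPolynomial.aeval_C]
  have h1 := c_const e ij.1
  have h2 := c_const e ij.2
  linear_combination h1 - h2

lemma curveIdeal_le_ker (e : Fin 3 → ℂ) :
    curveIdeal e ≤ RingHom.ker (phiE e).toRingHom := by
  rw [curveIdeal, Ideal.span_le]
  rintro _ ⟨ij, rfl⟩
  simp only [SetLike.mem_coe, RingHom.mem_ker, AlgHom.toRingHom_eq_coe, RingHom.coe_coe]
  exact phi_gen e ij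

def rho : Polynomial ℂ →ₐ[ℂ] MvPolynomial (Fin 3) ℂ := Polynomial.aeval (X 0)

lemma gen_mem (e : Fin 3 → ℂ) (ij : Fin 3 × Fin 3) :
    (X ij.1 : MvPolynomial (Fin 3) ℂ) ^ 2 - X ij.2 ^ 2 + C (e ij.1) - C (e ij.2)
      ∈ curveIdeal e :=
  Ideal.subset_span ⟨ij, rfl⟩

lemma rho_X : rho Polynomial.X = X 0 := by simp [rho]

lemma rho_A (c : ℂ) : rho (Polynomial.X ^ 2 + Polynomial.C c) = X 0 ^ 2 + C c := by
  simp [rho, algebraMap_eq]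

lemma normal_form (e : Fin 3 → ℂ) (p : MvPolynomial (Fin 3) ℂ) :
    ∃ q₀ q₁ q₂ q₃ : Polynomial ℂ,
      p - (rho q₀ + rho q₁ * X 1 + rho q₂ * X 2 + rho q₃ * (X 1 * X 2)) ∈ curveIdeal e := by
  induction p using MvPolynomial.induction_on with
  | C c =>
      refine ⟨Polynomial.C c, 0, 0, 0, ?_⟩
      have : rho (Polynomial.C c) = C c := by simp [rho, algebraMap_eq]
      rw [this]
      simp only [map_zero, zero_mul, add_zero, mul_zero]
      rw [sub_self]
      exact (curveIdeal e).zero_mem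
  | add p q hp hq =>
      obtain ⟨p₀, p₁, p₂, p₃, hp⟩ := hp
      obtain ⟨r₀, r₁, r₂, r₃, hr⟩ := hq
      refine ⟨p₀ + r₀, p₁ + r₁, p₂ + r₂, p₃ + r₃, ?_⟩
      have heq : p + q - (rho (p₀ + r₀) + rho (p₁ + r₁) * X 1 + rho (p₂ + r₂) * X 2 +
          rho (p₃ + r₃) * (X 1 * X 2))
          = (p - (rho p₀ + rho p₁ * X 1 + rho p₂ * X 2 + rho p₃ * (X 1 * X 2)))
            + (q - (rho r₀ + rho r₁ * X 1 + rho r₂ * X 2 + rho r₃ * (X 1 * X 2))) := by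
        simp only [map_add]
        ring
      rw [heq]
      exact add_mem hp hr
  | mul_X p n hp =>
      obtain ⟨q₀, q₁, q₂, q₃, hq⟩ := hp
      fin_cases n
      · refine ⟨Polynomial.X * q₀, Polynomial.X * q₁, Polynomial.X * q₂, Polynomial.X * q₃, ?_⟩
        have heq : p * X 0 - (rho (Polynomial.X * q₀) + rho (Polynomial.X * q₁) * X 1 +
            rho (Polynomial.X * q₂) * X 2 + rho (Polynomial.X * q₃) * (X 1 * X 2))
            = (p - (rho q₀ + rho q₁ * X 1 + rho q₂ * X 2 + rho q₃ * (X 1 * X 2))) * X 0 := by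
          simp only [map_mul, rho_X]
          ring
        rw [show (⟨0, by norm_num⟩ : Fin 3) = 0 from rfl, heq]
        exact Ideal.mul_mem_right _ _ hq
      · refine ⟨(Polynomial.X ^ 2 + Polynomial.C (e 0 - e 1)) * q₁, q₀, (Polynomial.X ^ 2 + Polynomial.C (e 0 - e 1)) * q₃, q₂, ?_⟩
        have heq : p * X 1 - (rho ((Polynomial.X ^ 2 + Polynomial.C (e 0 - e 1)) * q₁) + rho q₀ * X 1 + rho ((Polynomial.X ^ 2 + Polynomial.C (e 0 - e 1)) * q₃) * X 2 +
            rho q₂ * (X 1 * X 2))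
            = (p - (rho q₀ + rho q₁ * X 1 + rho q₂ * X 2 + rho q₃ * (X 1 * X 2))) * X 1 +
              (rho q₁ + rho q₃ * X 2) *
                ((X 1 : MvPolynomial (Fin 3) ℂ) ^ 2 - X 0 ^ 2 + C (e 1) - C (e 0)) := by
          simp only [map_mul, rho_A, C_sub]
          ring
        rw [show (⟨1, by norm_num⟩ : Fin 3) = 1 from rfl, heq]
        exact add_mem (Ideal.mul_mem_right _ _ hq)
          (Ideal.mul_mem_left _ _ (gen_mem e (1, 0)))
      · refine ⟨(Polynomial.X ^ 2 + Polynomial.C (e 0 - e 2)) * q₂, (Polynomial.X ^ 2 + Polynomial.C (e 0 - e 2)) * q₃, q₀, q₁, ?_⟩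
        have heq : p * X 2 - (rho ((Polynomial.X ^ 2 + Polynomial.C (e 0 - e 2)) * q₂) + rho ((Polynomial.X ^ 2 + Polynomial.C (e 0 - e 2)) * q₃) * X 1 + rho q₀ * X 2 +
            rho q₁ * (X 1 * X 2))
            = (p - (rho q₀ + rho q₁ * X 1 + rho q₂ * X 2 + rho q₃ * (X 1 * X 2))) * X 2 +
              (rho q₂ + rho q₃ * X 1) *
                ((X 2 : MvPolynomial (Fin 3) ℂ) ^ 2 - X 0 ^ 2 + C (e 2) - C (e 0)) := by
          simp only [map_mul, rho_A, C_sub]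
          ring
        rw [show (⟨2, by norm_num⟩ : Fin 3) = 2 from rfl, heq]
        exact add_mem (Ideal.mul_mem_right _ _ hq)
          (Ideal.mul_mem_left _ _ (gen_mem e (2, 0)))

section PolyAux2
open Polynomial

lemma irredX (a b : ℂ) (ha : a ≠ 0) (hb : b ≠ 0) (hab : a ≠ b) :
    Irreducible (Polynomial.X ^ 2 - Polynomial.C (qKK a b) : Polynomial KK) :=
  X_pow_sub_C_irreducible_of_prime Nat.prime_two
    (fun r => by rw [qKK]; exact no_sqrt a b ha hb hab r)

lemma qKK_ne (a b : ℂ) : qKK a b ≠ 0 :=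
  (map_ne_zero_iff _ (RatFunc.algebraMap_injective ℂ)).mpr (Qp_ne_zero a b)

lemma tK_ne (a : ℂ) : tK a ≠ 0 := by
  rw [tK]
  apply div_ne_zero _ two_sK_ne
  have h : sK ^ 2 - algebraMap ℂ KK a = algebraMap (Polynomial ℂ) KK (Polynomial.X ^ 2 - Polynomial.C a) := by
    rw [map_sub, map_pow, hX_sK, algebraMap_C_eq]
  rw [h]
  exact (map_ne_zero_iff _ (RatFunc.algebraMap_injective ℂ)).mpr
    (monic_X_pow_sub_C a two_ne_zero).ne_zero

lemma yK_ne (a : ℂ) : yK a ≠ 0 := by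
  rw [yK]
  apply div_ne_zero _ two_sK_ne
  have h : sK ^ 2 + algebraMap ℂ KK a = algebraMap (Polynomial ℂ) KK (Polynomial.X ^ 2 - Polynomial.C (-a)) := by
    rw [map_sub, map_pow, hX_sK, algebraMap_C_eq, map_neg, sub_neg_eq_add]
  rw [h]
  exact (map_ne_zero_iff _ (RatFunc.algebraMap_injective ℂ)).mpr
    (monic_X_pow_sub_C (-a) two_ne_zero).ne_zero

lemma w_indep (a b : ℂ) (ha : a ≠ 0) (hb : b ≠ 0) (hab : a ≠ b) (α β : KK)
    (h : algebraMap KK (FF a b) α + algebraMap KK (FF a b) β * WW a b = 0) :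
    α = 0 ∧ β = 0 := by
  haveI : Fact (Irreducible (Polynomial.X ^ 2 - Polynomial.C (qKK a b) : Polynomial KK)) := ⟨irredX a b ha hb hab⟩
  have hinj := (algebraMap KK (FF a b)).injective
  by_cases hβ : β = 0
  · refine ⟨?_, hβ⟩
    rw [hβ, map_zero, zero_mul, add_zero] at h
    exact hinj (by rw [h, map_zero])
  · exfalso
    have hβF : algebraMap KK (FF a b) β ≠ 0 := fun hh => hβ (hinj (by rw [hh, map_zero]))
    have hW : WW a b = algebraMap KK (FF a b) (-α / β) := by
      rw [map_div₀, map_neg, eq_div_iff hβF]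
      linear_combination h
    apply no_sqrt a b ha hb hab (-α / β)
    have hq : (-α / β) ^ 2 = qKK a b := by
      apply hinj
      rw [map_pow, ← hW, WW_sq]
    rw [hq, qKK]

lemma WW_ne (a b : ℂ) (ha : a ≠ 0) (hb : b ≠ 0) (hab : a ≠ b) : WW a b ≠ 0 := by
  haveI : Fact (Irreducible (Polynomial.X ^ 2 - Polynomial.C (qKK a b) : Polynomial KK)) := ⟨irredX a b ha hb hab⟩
  intro h0
  have h := WW_sq a b
  rw [h0, zero_pow two_ne_zero] at h
  exact qKK_ne a b ((algebraMap KK (FF a b)).injective (by rw [← h, map_zero]))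

lemma TT_ne (a b : ℂ) (ha : a ≠ 0) (hb : b ≠ 0) (hab : a ≠ b) : TT a b ≠ 0 := by
  haveI : Fact (Irreducible (Polynomial.X ^ 2 - Polynomial.C (qKK a b) : Polynomial KK)) := ⟨irredX a b ha hb hab⟩
  exact fun h => tK_ne a ((algebraMap KK (FF a b)).injective (by rw [← TT, h, map_zero]))

lemma YY_ne (a b : ℂ) (ha : a ≠ 0) (hb : b ≠ 0) (hab : a ≠ b) : YY a b ≠ 0 := by
  haveI : Fact (Irreducible (Polynomial.X ^ 2 - Polynomial.C (qKK a b) : Polynomial KK)) := ⟨irredX a b ha hb hab⟩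
  exact fun h => yK_ne a ((algebraMap KK (FF a b)).injective (by rw [← YY, h, map_zero]))

lemma ZZ_ne (a b : ℂ) (ha : a ≠ 0) (hb : b ≠ 0) (hab : a ≠ b) : ZZ a b ≠ 0 := by
  haveI : Fact (Irreducible (Polynomial.X ^ 2 - Polynomial.C (qKK a b) : Polynomial KK)) := ⟨irredX a b ha hb hab⟩
  refine mul_ne_zero ?_ (WW_ne a b ha hb hab)
  exact fun h => (inv_ne_zero two_sK_ne)
    ((algebraMap KK (FF a b)).injective (by rw [h, map_zero]))

end PolyAux2

lemma phiE_X (e : Fin 3 → ℂ) (i : Fin 3) : phiE e (X i) = wVec e i :=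
  MvPolynomial.aeval_X _ i

lemma ker_le_curveIdeal (e : Fin 3 → ℂ) (h01 : e 0 ≠ e 1) (h02 : e 0 ≠ e 2) (h12 : e 1 ≠ e 2) :
    RingHom.ker (phiE e).toRingHom ≤ curveIdeal e := by
  have ha : e 0 - e 1 ≠ 0 := sub_ne_zero.mpr h01
  have hb : e 0 - e 2 ≠ 0 := sub_ne_zero.mpr h02
  have hab : e 0 - e 1 ≠ e 0 - e 2 := fun hh => h12 (by linear_combination -hh)
  intro p hp
  simp only [RingHom.mem_ker, AlgHom.toRingHom_eq_coe, RingHom.coe_coe] at hp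
  obtain ⟨q₀, q₁, q₂, q₃, hq⟩ := normal_form e p
  have hι0 : phiE e (rho q₀ + rho q₁ * X 1 + rho q₂ * X 2 + rho q₃ * (X 1 * X 2)) = 0 := by
    have h2 := curveIdeal_le_ker e hq
    simp only [RingHom.mem_ker, AlgHom.toRingHom_eq_coe, RingHom.coe_coe] at h2
    rw [map_sub, hp, zero_sub, neg_eq_zero] at h2
    exact h2
  have hrho : ∀ q : Polynomial ℂ, phiE e (rho q) =
      algebraMap KK (FF (e 0 - e 1) (e 0 - e 2)) (Polynomial.aeval (tK (e 0 - e 1)) q) := by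
    intro q
    have h1 : phiE e (rho q) = Polynomial.aeval (phiE e (X 0)) q :=
      (Polynomial.aeval_algHom_apply (phiE e) (X 0) q).symm
    rw [h1, phiE_X]
    have h2 : Polynomial.aeval (wVec e 0) q
        = Polynomial.aeval ((IsScalarTower.toAlgHom ℂ KK (FF (e 0 - e 1) (e 0 - e 2)))
            (tK (e 0 - e 1))) q := rfl
    rw [h2, Polynomial.aeval_algHom_apply]
    rfl
  rw [map_add, map_add, map_add, map_mul, map_mul, map_mul, map_mul,
    hrho q₀, hrho q₁, hrho q₂, hrho q₃, phiE_X, phiE_X] at hι0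
  have hw1 : wVec e 1 = algebraMap KK (FF (e 0 - e 1) (e 0 - e 2)) (yK (e 0 - e 1)) := rfl
  have hw2 : wVec e 2 = algebraMap KK (FF (e 0 - e 1) (e 0 - e 2)) ((2 * sK)⁻¹) *
      WW (e 0 - e 1) (e 0 - e 2) := rfl
  rw [hw1, hw2] at hι0
  have heq : algebraMap KK (FF (e 0 - e 1) (e 0 - e 2))
        (Polynomial.aeval (tK (e 0 - e 1)) q₀ + Polynomial.aeval (tK (e 0 - e 1)) q₁ * yK (e 0 - e 1))
      + algebraMap KK (FF (e 0 - e 1) (e 0 - e 2))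
          ((Polynomial.aeval (tK (e 0 - e 1)) q₂ + Polynomial.aeval (tK (e 0 - e 1)) q₃ * yK (e 0 - e 1))
            * (2 * sK)⁻¹)
        * WW (e 0 - e 1) (e 0 - e 2) = 0 := by
    rw [map_mul, map_add, map_add, map_mul, map_mul]
    linear_combination hι0
  obtain ⟨hα, hβ⟩ := w_indep _ _ ha hb hab _ _ heq
  have hβ' : Polynomial.aeval (tK (e 0 - e 1)) q₂
      + Polynomial.aeval (tK (e 0 - e 1)) q₃ * yK (e 0 - e 1) = 0 := by
    rcases mul_eq_zero.mp hβ with h | h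
    · exact h
    · exact absurd h (inv_ne_zero two_sK_ne)
  obtain ⟨h0, h1⟩ := indep _ ha q₀ q₁ hα
  obtain ⟨h2, h3⟩ := indep _ ha q₂ q₃ hβ'
  rw [h0, h1, h2, h3] at hq
  simpa using hq

lemma curveIdeal_isPrime (e : Fin 3 → ℂ) (h01 : e 0 ≠ e 1) (h02 : e 0 ≠ e 2)
    (h12 : e 1 ≠ e 2) : (curveIdeal e).IsPrime := by
  have ha : e 0 - e 1 ≠ 0 := sub_ne_zero.mpr h01
  have hb : e 0 - e 2 ≠ 0 := sub_ne_zero.mpr h02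
  have hab : e 0 - e 1 ≠ e 0 - e 2 := fun hh => h12 (by linear_combination -hh)
  haveI : Fact (Irreducible (Polynomial.X ^ 2 -
      Polynomial.C (qKK (e 0 - e 1) (e 0 - e 2)) : Polynomial KK)) :=
    ⟨irredX _ _ ha hb hab⟩
  have hker : curveIdeal e = RingHom.ker (phiE e).toRingHom :=
    le_antisymm (curveIdeal_le_ker e) (ker_le_curveIdeal e h01 h02 h12)
  rw [hker]
  exact RingHom.ker_isPrime _

lemma vhat_ne (e : Fin 3 → ℂ) (h01 : e 0 ≠ e 1) (h02 : e 0 ≠ e 2) (h12 : e 1 ≠ e 2)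
    (i : Fin 3) : vhat e i ≠ 0 := by
  have ha : e 0 - e 1 ≠ 0 := sub_ne_zero.mpr h01
  have hb : e 0 - e 2 ≠ 0 := sub_ne_zero.mpr h02
  have hab : e 0 - e 1 ≠ e 0 - e 2 := fun hh => h12 (by linear_combination -hh)
  rw [vhat, Ne, Ideal.Quotient.eq_zero_iff_mem]
  intro hmem
  have h := curveIdeal_le_ker e hmem
  simp only [RingHom.mem_ker, AlgHom.toRingHom_eq_coe, RingHom.coe_coe] at h
  rw [phiE_X] at h
  fin_cases i
  · exact TT_ne _ _ ha hb hab h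
  · exact YY_ne _ _ ha hb hab h
  · exact ZZ_ne _ _ ha hb hab h

lemma gi_mem (e : Fin 3 → ℂ) (i : Fin 3) : Pi.single i (vhat e i) ∈ lieGenR e :=
  Submodule.mem_sInf.mpr fun _ hS => hS.1 i

lemma lcs_le (e : Fin 3 → ℂ) (I : Submodule ℂ (Fin 3 → Ecur e)) (hsub : I ≤ lieGenR e)
    (hideal : ∀ x ∈ lieGenR e, ∀ y ∈ I, so3br x y ∈ I) :
    ∀ j, lcsSo3 e I j ≤ I := by
  intro j
  induction j with
  | zero => exact le_rfl
  | succ j ih =>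
      show Submodule.span ℂ _ ≤ I
      rw [Submodule.span_le]
      rintro z ⟨x, hx, y, hy, rfl⟩
      exact hideal x (hsub hx) y (ih hy)

section comps
variable {e : Fin 3 → ℂ}

lemma comp0 (v : Ecur e) (w : Fin 3 → Ecur e) :
    (so3br (so3br (Pi.single 0 v) w) w) 0 = -(v * (w 1 * w 1 + w 2 * w 2)) := by
  have h0 : (Pi.single (0 : Fin 3) v : Fin 3 → Ecur e) 0 = v := Pi.single_eq_same _ _
  have h1 : (Pi.single (0 : Fin 3) v : Fin 3 → Ecur e) 1 = 0 := Pi.single_eq_of_ne (by decide) _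
  have h2 : (Pi.single (0 : Fin 3) v : Fin 3 → Ecur e) 2 = 0 := Pi.single_eq_of_ne (by decide) _
  simp [so3br, h0, h1, h2]
  ring

lemma comp1 (v : Ecur e) (w : Fin 3 → Ecur e) :
    (so3br (so3br (Pi.single 1 v) w) w) 1 = -(v * (w 0 * w 0 + w 2 * w 2)) := by
  have h0 : (Pi.single (1 : Fin 3) v : Fin 3 → Ecur e) 0 = 0 := Pi.single_eq_of_ne (by decide) _
  have h1 : (Pi.single (1 : Fin 3) v : Fin 3 → Ecur e) 1 = v := Pi.single_eq_same _ _
  have h2 : (Pi.single (1 : Fin 3) v : Fin 3 → Ecur e) 2 = 0 := Pi.single_eq_of_ne (by decide) _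
  simp [so3br, h0, h1, h2]
  ring

lemma comp2 (v : Ecur e) (w : Fin 3 → Ecur e) :
    (so3br (so3br (Pi.single 2 v) w) w) 2 = -(v * (w 0 * w 0 + w 1 * w 1)) := by
  have h0 : (Pi.single (2 : Fin 3) v : Fin 3 → Ecur e) 0 = 0 := Pi.single_eq_of_ne (by decide) _
  have h1 : (Pi.single (2 : Fin 3) v : Fin 3 → Ecur e) 1 = 0 := Pi.single_eq_of_ne (by decide) _
  have h2 : (Pi.single (2 : Fin 3) v : Fin 3 → Ecur e) 2 = v := Pi.single_eq_same _ _
  simp [so3br, h0, h1, h2]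
  ring

end comps

lemma lcs_step (e : Fin 3 → ℂ) (h01 : e 0 ≠ e 1) (h02 : e 0 ≠ e 2) (h12 : e 1 ≠ e 2)
    (I : Submodule ℂ (Fin 3 → Ecur e)) (hsub : I ≤ lieGenR e)
    (hideal : ∀ x ∈ lieGenR e, ∀ y ∈ I, so3br x y ∈ I)
    (j : ℕ) (h : lcsSo3 e I (j + 1) = ⊥) : lcsSo3 e I j = ⊥ := by
  haveI : (curveIdeal e).IsPrime := curveIdeal_isPrime e h01 h02 h12
  haveI : IsDomain (Ecur e) := Ideal.Quotient.isDomain (curveIdeal e)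
  rw [eq_bot_iff]
  intro w hw
  rw [Submodule.mem_bot]
  have hwI : w ∈ I := lcs_le e I hsub hideal j hw
  have hbr : ∀ i : Fin 3, so3br (so3br (Pi.single i (vhat e i)) w) w = 0 := by
    intro i
    have h1 : so3br (Pi.single i (vhat e i)) w ∈ I := hideal _ (gi_mem e i) w hwI
    have h2 : so3br (so3br (Pi.single i (vhat e i)) w) w ∈ lcsSo3 e I (j + 1) := by
      show _ ∈ Submodule.span ℂ _
      exact Submodule.subset_span ⟨_, h1, w, hw, rfl⟩
    rw [h] at h2
    exact (Submodule.mem_bot ℂ).mp h2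
  have hv : ∀ i : Fin 3, vhat e i ≠ 0 := vhat_ne e h01 h02 h12
  have E0 : w 1 * w 1 + w 2 * w 2 = 0 := by
    have h := congrFun (hbr 0) 0
    rw [comp0] at h
    simp only [Pi.zero_apply, neg_eq_zero] at h
    exact (mul_eq_zero.mp h).resolve_left (hv 0)
  have E1 : w 0 * w 0 + w 2 * w 2 = 0 := by
    have h := congrFun (hbr 1) 1
    rw [comp1] at h
    simp only [Pi.zero_apply, neg_eq_zero] at h
    exact (mul_eq_zero.mp h).resolve_left (hv 1)
  have E2 : w 0 * w 0 + w 1 * w 1 = 0 := by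
    have h := congrFun (hbr 2) 2
    rw [comp2] at h
    simp only [Pi.zero_apply, neg_eq_zero] at h
    exact (mul_eq_zero.mp h).resolve_left (hv 2)
  have h2ne : (2 : Ecur e) ≠ 0 := fun hh =>
    two_ne_zero ((algebraMap ℂ (Ecur e)).injective (by rw [map_ofNat, hh, map_zero]))
  have hsq : ∀ k : Fin 3, w k = 0 := by
    have k0 : w 0 = 0 := by
      have h2s : (2 : Ecur e) * (w 0 * w 0) = 0 := by linear_combination E1 + E2 - E0
      exact mul_self_eq_zero.mp ((mul_eq_zero.mp h2s).resolve_left h2ne)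
    have k1 : w 1 = 0 := by
      have h2s : (2 : Ecur e) * (w 1 * w 1) = 0 := by linear_combination E0 + E2 - E1
      exact mul_self_eq_zero.mp ((mul_eq_zero.mp h2s).resolve_left h2ne)
    have k2 : w 2 = 0 := by
      have h2s : (2 : Ecur e) * (w 2 * w 2) = 0 := by linear_combination E0 + E1 - E2
      exact mul_self_eq_zero.mp ((mul_eq_zero.mp h2s).resolve_left h2ne)
    intro k
    fin_cases k
    · exact k0
    · exact k1
    · exact k2
  funext k
  exact hsq k


/-- for pairwise distinct `e₁,e₂,e₃`, every Lie ideal of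
`R = R_{e₁,e₂,e₃}` (a `ℂ`-subspace `I ⊆ R` with `[R,I] ⊆ I`) that is nilpotent as a
Lie algebra is the zero ideal. -/
theorem statement17 (e : Fin 3 → ℂ) (he : ∀ i j, i ≠ j → e i ≠ e j)
    (I : Submodule ℂ (Fin 3 → Ecur e))
    (hsub : I ≤ lieGenR e)
    (hideal : ∀ x ∈ lieGenR e, ∀ y ∈ I, so3br x y ∈ I)
    (hnilp : ∃ j, lcsSo3 e I j = ⊥) :
    I = ⊥ := by
  obtain ⟨j, hj⟩ := hnilp
  have h01 : e 0 ≠ e 1 := he 0 1 (by decide)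
  have h02 : e 0 ≠ e 2 := he 0 2 (by decide)
  have h12 : e 1 ≠ e 2 := he 1 2 (by decide)
  have key : ∀ j, lcsSo3 e I j = ⊥ → I = ⊥ := by
    intro j
    induction j with
    | zero => exact fun h0 => h0
    | succ j ih => exact fun hj1 => ih (lcs_step e h01 h02 h12 I hsub hideal j hj1)
  exact key j hj
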